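/- Let g = g_1 ⊕ g_2 ⊕ g_3 be a Lie algebra with [g_1,g_1]=0, [g_1,g_2] ⊆ g_2, [g_1,g_3] ⊆ g_3, [g_2,g_2] ⊆ g_2, [g_2,g_3] ⊆ g_1, [g_3,g_3] ⊆ g_3 (e.g. a triangular decomposition h ⊕ n^+ ⊕ n^- of a semisimple Lie algebra). For monomials p of tridegree (i_1,i_2,i_3) and q of tridegree (i_1',i_2',i_3') lying in the centralizer S(g)^{g_1}, the Poisson bracket {p,q} is a sum of monomials whose tridegrees belong to the set {(i_1+i_1'−1, i_2+i_2', i_3+i_3'), (i_1+i_1'+1, i_2+i_2'−1, i_3+i_3'−1), (i_1+i_1', i_2+i_2', i_3+i_3'−1), (i_1+i_1', i_2+i_2'−1, i_3+i_3')}. -/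
import Mathlib


open MvPolynomial

/-- The Poisson–Lie bracket on the symmetric algebra of an `n`-dimensional Lie algebra
with structure constants `K i j k`. -/
noncomputable def pbracket {F : Type*} [CommRing F] {n : ℕ}
    (K : Fin n → Fin n → Fin n → F) (p q : MvPolynomial (Fin n) F) :
    MvPolynomial (Fin n) F :=
  ∑ i : Fin n, ∑ j : Fin n, ∑ k : Fin n,
    MvPolynomial.C (K i j k) * MvPolynomial.X k * pderiv i p * pderiv j q

/-- The grading of a monomial with exponent vector `d` with respect to a block
decomposition `b` of the variables: `blockDeg b d j` is the total degree in the
variables belonging to the `j`-th block. -/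
noncomputable def blockDeg {σ : Type*} {m : ℕ} (b : σ → Fin m) (d : σ →₀ ℕ)
    (j : Fin m) : ℕ :=
  d.sum fun s k => if b s = j then k else 0

lemma blockDeg_add' {σ : Type*} {m : ℕ} (b : σ → Fin m) (d e : σ →₀ ℕ) (j : Fin m) :
    blockDeg b (d + e) j = blockDeg b d j + blockDeg b e j := by
  unfold blockDeg
  exact Finsupp.sum_add_index' (fun s => by simp) (fun s k1 k2 => by split <;> simp)

lemma blockDeg_single' {σ : Type*} {m : ℕ} (b : σ → Fin m) (i : σ) (k : ℕ) (j : Fin m) :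
    blockDeg b (Finsupp.single i k) j = if b i = j then k else 0 := by
  unfold blockDeg
  rw [Finsupp.sum_single_index (by simp)]

lemma monomial_support_key' {F : Type*} [Field F] {n : ℕ} (K : Fin n → Fin n → Fin n → F)
    (d e f : Fin n →₀ ℕ) (c c' : F) (i j k : Fin n)
    (hf : f ∈ (MvPolynomial.monomial
      (Finsupp.single k 1 + (d - Finsupp.single i 1) + (e - Finsupp.single j 1))
      (K i j k * (c * d i) * (c' * e j)) : MvPolynomial (Fin n) F).support) :
    K i j k ≠ 0 ∧ d i ≠ 0 ∧ e j ≠ 0 ∧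
      f + Finsupp.single i 1 + Finsupp.single j 1 = Finsupp.single k 1 + d + e := by
  classical
  rw [MvPolynomial.support_monomial] at hf
  split at hf
  · simp at hf
  · next h =>
    rw [Finset.mem_singleton] at hf
    have hK : K i j k ≠ 0 := fun h' => h (by simp [h'])
    have hd : d i ≠ 0 := fun h' => h (by simp [h'])
    have he : e j ≠ 0 := fun h' => h (by simp [h'])
    refine ⟨hK, hd, he, ?_⟩
    subst hf
    ext a
    simp only [Finsupp.add_apply, Finsupp.tsub_apply, Finsupp.single_apply]
    by_cases hia : i = a <;> by_cases hja : j = a <;> subst_vars <;> simp_all <;> omega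

/-- For `g = g₁ ⊕ g₂ ⊕ g₃` with `[g₁,g₁]=0`, `[g₁,g₂]⊆g₂`, `[g₁,g₃]⊆g₃`, `[g₂,g₂]⊆g₂`,
`[g₂,g₃]⊆g₁`, `[g₃,g₃]⊆g₃` (e.g. a triangular decomposition), and monomials `p, q` in
the centralizer `S(g)^{g₁}` of tridegrees `(i₁,i₂,i₃)` and `(i₁',i₂',i₃')`, every
monomial occurring in `{p,q}` has tridegree in the set
`{(i₁+i₁'−1, i₂+i₂', i₃+i₃'), (i₁+i₁'+1, i₂+i₂'−1, i₃+i₃'−1),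
  (i₁+i₁', i₂+i₂', i₃+i₃'−1), (i₁+i₁', i₂+i₂'−1, i₃+i₃')}`. -/
theorem stmt7 {F : Type*} [Field F] {n : ℕ}
    (K : Fin n → Fin n → Fin n → F)
    (hanti : ∀ i j k, K i j k = - K j i k)
    (b : Fin n → Fin 3)
    (h00 : ∀ i j k, b i = 0 → b j = 0 → K i j k = 0)
    (h01 : ∀ i j k, b i = 0 → b j = 1 → K i j k ≠ 0 → b k = 1)
    (h10 : ∀ i j k, b i = 1 → b j = 0 → K i j k ≠ 0 → b k = 1)
    (h02 : ∀ i j k, b i = 0 → b j = 2 → K i j k ≠ 0 → b k = 2)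
    (h20 : ∀ i j k, b i = 2 → b j = 0 → K i j k ≠ 0 → b k = 2)
    (h11 : ∀ i j k, b i = 1 → b j = 1 → K i j k ≠ 0 → b k = 1)
    (h12 : ∀ i j k, b i = 1 → b j = 2 → K i j k ≠ 0 → b k = 0)
    (h21 : ∀ i j k, b i = 2 → b j = 1 → K i j k ≠ 0 → b k = 0)
    (h22 : ∀ i j k, b i = 2 → b j = 2 → K i j k ≠ 0 → b k = 2)
    (d e : Fin n →₀ ℕ) (c c' : F) (hc : c ≠ 0) (hc' : c' ≠ 0)
    (hp : ∀ i, b i = 0 →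
      pbracket K (MvPolynomial.X i) (MvPolynomial.monomial d c) = 0)
    (hq : ∀ i, b i = 0 →
      pbracket K (MvPolynomial.X i) (MvPolynomial.monomial e c') = 0) :
    ∀ f ∈ (pbracket K (MvPolynomial.monomial d c) (MvPolynomial.monomial e c')).support,
      (blockDeg b f 0 + 1 = blockDeg b d 0 + blockDeg b e 0 ∧
        blockDeg b f 1 = blockDeg b d 1 + blockDeg b e 1 ∧
        blockDeg b f 2 = blockDeg b d 2 + blockDeg b e 2)
      ∨ (blockDeg b f 0 = blockDeg b d 0 + blockDeg b e 0 + 1 ∧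
        blockDeg b f 1 + 1 = blockDeg b d 1 + blockDeg b e 1 ∧
        blockDeg b f 2 + 1 = blockDeg b d 2 + blockDeg b e 2)
      ∨ (blockDeg b f 0 = blockDeg b d 0 + blockDeg b e 0 ∧
        blockDeg b f 1 = blockDeg b d 1 + blockDeg b e 1 ∧
        blockDeg b f 2 + 1 = blockDeg b d 2 + blockDeg b e 2)
      ∨ (blockDeg b f 0 = blockDeg b d 0 + blockDeg b e 0 ∧
        blockDeg b f 1 + 1 = blockDeg b d 1 + blockDeg b e 1 ∧
        blockDeg b f 2 = blockDeg b d 2 + blockDeg b e 2) := by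
  classical
  intro f hf
  unfold pbracket at hf
  obtain ⟨i, -, hf⟩ := Finset.mem_biUnion.1 (MvPolynomial.support_sum hf)
  obtain ⟨j, -, hf⟩ := Finset.mem_biUnion.1 (MvPolynomial.support_sum hf)
  obtain ⟨k, -, hf⟩ := Finset.mem_biUnion.1 (MvPolynomial.support_sum hf)
  simp only [pderiv_monomial] at hf
  rw [show (C (K i j k) * X k : MvPolynomial (Fin n) F) = monomial (Finsupp.single k 1) (K i j k) by
        rw [X, C_mul_monomial, mul_one],
      monomial_mul, monomial_mul] at hf
  obtain ⟨hK, hd, he, heq⟩ := monomial_support_key' K d e f c c' i j k hf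
  have deg : ∀ t : Fin 3,
      blockDeg b f t + (if b i = t then 1 else 0) + (if b j = t then 1 else 0)
        = (if b k = t then 1 else 0) + blockDeg b d t + blockDeg b e t := by
    intro t
    have := congrArg (fun x => blockDeg b x t) heq
    simpa only [blockDeg_add', blockDeg_single'] using this
  have d0 := deg 0; have d1 := deg 1; have d2 := deg 2
  have tri : ∀ x : Fin 3, x = 0 ∨ x = 1 ∨ x = 2 := by decide
  rcases tri (b i) with hbi | hbi | hbi <;> rcases tri (b j) with hbj | hbj | hbj
  · exact absurd (h00 i j k hbi hbj) hK
  · have hbk := h01 i j k hbi hbj hK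
    rw [hbi, hbj, hbk] at d0 d1 d2
    simp only [Fin.isValue, reduceIte, show ((0:Fin 3)=1)=False by simp, show ((0:Fin 3)=2)=False by simp, show ((1:Fin 3)=0)=False by simp, show ((1:Fin 3)=2)=False by simp, show ((2:Fin 3)=0)=False by simp, show ((2:Fin 3)=1)=False by simp, if_true, if_false, if_pos rfl] at d0 d1 d2
    omega
  · have hbk := h02 i j k hbi hbj hK
    rw [hbi, hbj, hbk] at d0 d1 d2
    simp only [Fin.isValue, reduceIte, show ((0:Fin 3)=1)=False by simp, show ((0:Fin 3)=2)=False by simp, show ((1:Fin 3)=0)=False by simp, show ((1:Fin 3)=2)=False by simp, show ((2:Fin 3)=0)=False by simp, show ((2:Fin 3)=1)=False by simp, if_true, if_false, if_pos rfl] at d0 d1 d2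
    omega
  · have hbk := h10 i j k hbi hbj hK
    rw [hbi, hbj, hbk] at d0 d1 d2
    simp only [Fin.isValue, reduceIte, show ((0:Fin 3)=1)=False by simp, show ((0:Fin 3)=2)=False by simp, show ((1:Fin 3)=0)=False by simp, show ((1:Fin 3)=2)=False by simp, show ((2:Fin 3)=0)=False by simp, show ((2:Fin 3)=1)=False by simp, if_true, if_false, if_pos rfl] at d0 d1 d2
    omega
  · have hbk := h11 i j k hbi hbj hK
    rw [hbi, hbj, hbk] at d0 d1 d2
    simp only [Fin.isValue, reduceIte, show ((0:Fin 3)=1)=False by simp, show ((0:Fin 3)=2)=False by simp, show ((1:Fin 3)=0)=False by simp, show ((1:Fin 3)=2)=False by simp, show ((2:Fin 3)=0)=False by simp, show ((2:Fin 3)=1)=False by simp, if_true, if_false, if_pos rfl] at d0 d1 d2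
    omega
  · have hbk := h12 i j k hbi hbj hK
    rw [hbi, hbj, hbk] at d0 d1 d2
    simp only [Fin.isValue, reduceIte, show ((0:Fin 3)=1)=False by simp, show ((0:Fin 3)=2)=False by simp, show ((1:Fin 3)=0)=False by simp, show ((1:Fin 3)=2)=False by simp, show ((2:Fin 3)=0)=False by simp, show ((2:Fin 3)=1)=False by simp, if_true, if_false, if_pos rfl] at d0 d1 d2
    omega
  · have hbk := h20 i j k hbi hbj hK
    rw [hbi, hbj, hbk] at d0 d1 d2
    simp only [Fin.isValue, reduceIte, show ((0:Fin 3)=1)=False by simp, show ((0:Fin 3)=2)=False by simp, show ((1:Fin 3)=0)=False by simp, show ((1:Fin 3)=2)=False by simp, show ((2:Fin 3)=0)=False by simp, show ((2:Fin 3)=1)=False by simp, if_true, if_false, if_pos rfl] at d0 d1 d2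
    omega
  · have hbk := h21 i j k hbi hbj hK
    rw [hbi, hbj, hbk] at d0 d1 d2
    simp only [Fin.isValue, reduceIte, show ((0:Fin 3)=1)=False by simp, show ((0:Fin 3)=2)=False by simp, show ((1:Fin 3)=0)=False by simp, show ((1:Fin 3)=2)=False by simp, show ((2:Fin 3)=0)=False by simp, show ((2:Fin 3)=1)=False by simp, if_true, if_false, if_pos rfl] at d0 d1 d2
    omega
  · have hbk := h22 i j k hbi hbj hK
    rw [hbi, hbj, hbk] at d0 d1 d2
    simp only [Fin.isValue, reduceIte, show ((0:Fin 3)=1)=False by simp, show ((0:Fin 3)=2)=False by simp, show ((1:Fin 3)=0)=False by simp, show ((1:Fin 3)=2)=False by simp, show ((2:Fin 3)=0)=False by simp, show ((2:Fin 3)=1)=False by simp, if_true, if_false, if_pos rfl] at d0 d1 d2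
    omega
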